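/- Two rooted multigraphs (G, S) and (H, R) have rooted-isomorphic unfolding trees if and only if there exist non-edge-collapsing graph equivalence relations ∼_G on G and ∼_H on H such that (G/∼_G, [S]) is rooted-isomorphic to (H/∼_H, [R]). -/

import Mathlib

/-- A directed multigraph: vertices, edges, origin and terminus maps. -/
structure Multigraph where
  V : Type
  E : Type
  o : E → V
  t : E → V

namespace Multigraph

/-- Graph homomorphism. -/
structure Hom (G H : Multigraph) where
  onV : G.V → H.V
  onE : G.E → H.E
  map_o : ∀ e, H.o (onE e) = onV (G.o e)
  map_t : ∀ e, H.t (onE e) = onV (G.t e)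

/-- Graph isomorphism. -/
structure Iso (G H : Multigraph) extends Hom G H where
  bijV : Function.Bijective onV
  bijE : Function.Bijective onE

/-- Rooted isomorphism of rooted multigraphs. -/
def RootedIso (G : Multigraph) (S : G.V) (H : Multigraph) (R : H.V) : Prop :=
  ∃ φ : Iso G H, φ.onV S = R

/-- Outgoing edge neighbourhood of a vertex. -/
def Eo (G : Multigraph) (v : G.V) : Set G.E := {e | G.o e = v}

/-- Incoming edge neighbourhood of a vertex. -/
def Et (G : Multigraph) (v : G.V) : Set G.E := {e | G.t e = v}

/-- A graph equivalence relation: compatible equivalences on vertices and edges. -/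
structure GraphEquiv (G : Multigraph) where
  rV : G.V → G.V → Prop
  rE : G.E → G.E → Prop
  equivV : Equivalence rV
  equivE : Equivalence rE
  compat_o : ∀ e f, rE e f → rV (G.o e) (G.o f)
  compat_t : ∀ e f, rE e f → rV (G.t e) (G.t f)

/-- Non-edge-collapsing graph equivalence relation. -/
def GraphEquiv.NonEdgeCollapsing {G : Multigraph} (s : GraphEquiv G) : Prop :=
  ∀ v v', s.rV v v' → ∀ e, G.o e = v → ∃! e', G.o e' = v' ∧ s.rE e e'

/-- Quotient graph by a graph equivalence relation. -/
def GraphEquiv.quot {G : Multigraph} (s : GraphEquiv G) : Multigraph where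
  V := Quot s.rV
  E := Quot s.rE
  o := Quot.lift (fun e => Quot.mk s.rV (G.o e)) (fun e f h => Quot.sound (s.compat_o e f h))
  t := Quot.lift (fun e => Quot.mk s.rV (G.t e)) (fun e f h => Quot.sound (s.compat_t e f h))

/-- A graph is non-redundant if its only non-edge-collapsing equivalence relation is trivial. -/
def NonRedundant (G : Multigraph) : Prop :=
  ∀ s : GraphEquiv G, s.NonEdgeCollapsing →
    (∀ v w, s.rV v w → v = w) ∧ (∀ e f, s.rE e f → e = f)

/-- Directed walks in `G` starting at `S`, indexed by the terminus. -/
inductive Walk (G : Multigraph) (S : G.V) : G.V → Type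
  | nil : Walk G S S
  | snoc {v : G.V} (w : Walk G S v) (e : G.E) (h : G.o e = v) : Walk G S (G.t e)

/-- Length of a walk. -/
def Walk.length {G : Multigraph} {S : G.V} : ∀ {v : G.V}, Walk G S v → ℕ
  | _, .nil => 0
  | _, .snoc w _ _ => w.length + 1

/-- Reachability by a directed walk. -/
def Reaches (G : Multigraph) (x y : G.V) : Prop := Nonempty (Walk G x y)

/-- `S` is a root: every vertex is reachable from `S`. -/
def IsRoot (G : Multigraph) (S : G.V) : Prop := ∀ v, Reaches G S v

/-- No two edges share a terminus. -/
def NoClashes (G : Multigraph) : Prop := ∀ e f : G.E, G.t e = G.t f → e = f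

/-- No non-empty closed walks. -/
def Acyclic (G : Multigraph) : Prop := ∀ v : G.V, ∀ w : Walk G v v, w.length = 0

/-- The outgoing subgraph `G_x`: induced on the vertices reachable from `x`. -/
def outGraph (G : Multigraph) (x : G.V) : Multigraph where
  V := {y : G.V // Reaches G x y}
  E := {e : G.E // Reaches G x (G.o e)}
  o := fun e => ⟨G.o e.1, e.2⟩
  t := fun e => ⟨G.t e.1, e.2.elim fun w => ⟨w.snoc e.1 rfl⟩⟩

/-- The natural root of `G_x`. -/
def rootOut (G : Multigraph) (x : G.V) : (outGraph G x).V := ⟨x, ⟨Walk.nil⟩⟩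

/-- o-equivalence of vertices: rooted isomorphism of their outgoing graphs. -/
def OEquiv (G : Multigraph) (v w : G.V) : Prop :=
  RootedIso (outGraph G v) (rootOut G v) (outGraph G w) (rootOut G w)

/-- Walks starting at `S` (with arbitrary terminus). -/
abbrev WalkFrom (G : Multigraph) (S : G.V) : Type := Σ v : G.V, Walk G S v

/-- Terminus of a walk. -/
def term {G : Multigraph} {S : G.V} (w : WalkFrom G S) : G.V := w.1

/-- The unfolding tree `T(G, S)`: vertices are walks from `S`, edges are one-step extensions. -/
def unfoldTree (G : Multigraph) (S : G.V) : Multigraph where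
  V := WalkFrom G S
  E := Σ v : G.V, Walk G S v × {e : G.E // G.o e = v}
  o := fun x => ⟨x.1, x.2.1⟩
  t := fun x => ⟨G.t x.2.2.1, x.2.1.snoc x.2.2.1 x.2.2.2⟩

/-- The empty walk at `S`, root of the unfolding tree. -/
def nilWalk (G : Multigraph) (S : G.V) : WalkFrom G S := ⟨S, Walk.nil⟩

/-- Prefix order on walks from `S`. -/
inductive IsPrefix (G : Multigraph) (S : G.V) : WalkFrom G S → WalkFrom G S → Prop
  | refl (w : WalkFrom G S) : IsPrefix G S w w
  | snoc {w : WalkFrom G S} {v : G.V} (u : Walk G S v) (e : G.E) (h : G.o e = v) :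
      IsPrefix G S w ⟨v, u⟩ → IsPrefix G S w ⟨G.t e, u.snoc e h⟩

/-- The half-tree of the unfolding tree rooted at the walk `w`. -/
def halfTree (G : Multigraph) (S : G.V) (w : WalkFrom G S) : Multigraph where
  V := {u : WalkFrom G S // IsPrefix G S w u}
  E := {x : Σ v : G.V, Walk G S v × {e : G.E // G.o e = v} // IsPrefix G S w ⟨x.1, x.2.1⟩}
  o := fun x => ⟨⟨x.1.1, x.1.2.1⟩, x.2⟩
  t := fun x => ⟨⟨G.t x.1.2.2.1, x.1.2.1.snoc x.1.2.2.1 x.1.2.2.2⟩,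
    IsPrefix.snoc x.1.2.1 x.1.2.2.1 x.1.2.2.2 x.2⟩

/-- A subspace of the unfolding tree: a set of walks closed under extension. -/
def IsSubspace (G : Multigraph) (S : G.V) (𝒮 : Set (WalkFrom G S)) : Prop :=
  ∀ w ∈ 𝒮, ∀ w', IsPrefix G S w w' → w' ∈ 𝒮

/-- An inescapable subspace: every walk extends into it. -/
def Inescapable (G : Multigraph) (S : G.V) (𝒮 : Set (WalkFrom G S)) : Prop :=
  ∀ w : WalkFrom G S, ∃ u ∈ 𝒮, IsPrefix G S w u

/-- A cofinite subspace: a finite union of half-trees. -/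
def CofiniteSubspace (G : Multigraph) (S : G.V) (𝒮 : Set (WalkFrom G S)) : Prop :=
  ∃ F : Set (WalkFrom G S), F.Finite ∧ 𝒮 = {u | ∃ x ∈ F, IsPrefix G S x u}

/-- `B` is a basis of the subspace `𝒮`: a prefix-antichain in `𝒮` such that every
walk in `𝒮` has a prefix in `B`. -/
def IsBasis (G : Multigraph) (S : G.V) (𝒮 B : Set (WalkFrom G S)) : Prop :=
  B ⊆ 𝒮 ∧ (∀ b ∈ B, ∀ b' ∈ B, IsPrefix G S b b' → b = b') ∧
    ∀ w ∈ 𝒮, ∃ b ∈ B, IsPrefix G S b w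

/-- Deleting a set of edges from a graph (also removing vertices all of whose
incident edges are deleted). -/
def deleteEdges (G : Multigraph) (F : Set G.E) : Multigraph where
  V := {v : G.V // ¬((∃ e, G.o e = v ∨ G.t e = v) ∧ ∀ e, (G.o e = v ∨ G.t e = v) → e ∈ F)}
  E := {e : G.E // e ∉ F}
  o := fun e => ⟨G.o e.1, fun h => e.2 (h.2 e.1 (Or.inl rfl))⟩
  t := fun e => ⟨G.t e.1, fun h => e.2 (h.2 e.1 (Or.inr rfl))⟩

/-- Two trees are almost isomorphic: after removing finite subtrees (given by their
finite edge sets), the remainders are isomorphic. -/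
def AlmostIso (T1 T2 : Multigraph) : Prop :=
  ∃ F1 : Set T1.E, F1.Finite ∧ ∃ F2 : Set T2.E, F2.Finite ∧
    Nonempty (Iso (deleteEdges T1 F1) (deleteEdges T2 F2))

open scoped Classical in
/-- The multiset of termini of the outgoing edges of `v`. -/
noncomputable def outSum (G : Multigraph) [Fintype G.E] (v : G.V) : Multiset G.V :=
  ∑ e ∈ Finset.univ.filter (fun e => G.o e = v), ({G.t e} : Multiset G.V)

/-- The defining relations of the graph monoid: `v = Σ_{e ∈ E_o(v)} t(e)` for non-sinks. -/
def monoidRel (G : Multigraph) [Fintype G.E] : Multiset G.V → Multiset G.V → Prop :=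
  fun s u => ∃ v : G.V, (∃ e, G.o e = v) ∧ s = {v} ∧ u = outSum G v

/-- Equality in the graph monoid `M(G)`: the additive congruence generated by the
graph relations on the free commutative monoid `Multiset G.V`. -/
def monoidEq (G : Multigraph) [Fintype G.E] (s u : Multiset G.V) : Prop :=
  addConGen (monoidRel G) s u

/-- A robustly rooted graph: it has a root, and every root has an out-neighbour that
is again a root. -/
def RobustlyRooted (G : Multigraph) : Prop :=
  (∃ S, IsRoot G S) ∧ ∀ v, IsRoot G v → ∃ e, G.o e = v ∧ IsRoot G (G.t e)

/-- The two-vertex multigraph with adjacency matrix `(A B; C D)`;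
`false` is the vertex `x`, `true` is the vertex `y`. -/
def twoVertexGraph (A B C D : ℕ) : Multigraph where
  V := Bool
  E := (Fin A ⊕ Fin B) ⊕ (Fin C ⊕ Fin D)
  o := fun e => match e with | .inl _ => false | .inr _ => true
  t := fun e => match e with
    | .inl (.inl _) => false
    | .inl (.inr _) => true
    | .inr (.inl _) => false
    | .inr (.inr _) => true

instance (A B C D : ℕ) : Fintype (twoVertexGraph A B C D).E :=
  inferInstanceAs (Fintype ((Fin A ⊕ Fin B) ⊕ (Fin C ⊕ Fin D)))

end Multigraph

/-!
A covering, i.e. a homomorphism that is bijective on every outgoing edge neighbourhood, lifts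
walks uniquely and therefore induces an isomorphism of unfolding trees. Quotient maps by
non-edge-collapsing relations, isomorphisms, and the terminus map `T(G, S) → G` are coverings.
The first two give the backward direction; the third shows that an isomorphism of unfolding
trees matches the out-edges of corresponding vertices so that their targets again have
isomorphic unfolding trees. For the forward direction, classify the vertices of `G` and `H` by
the isomorphism type of their unfolding tree; fixing a representative of each type and matching
out-edges along tree isomorphisms yields coverings of `G` and of `H` onto a common graph of
types, and the kernels of these two coverings are the required equivalence relations.
-/

namespace Multigraph

variable {A B C : Multigraph}

def Iso.refl (A : Multigraph) : Iso A A :=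
  ⟨⟨id, id, fun _ => rfl, fun _ => rfl⟩, Function.bijective_id, Function.bijective_id⟩

def Iso.trans (φ : Iso A B) (ψ : Iso B C) : Iso A C where
  onV := ψ.onV ∘ φ.onV
  onE := ψ.onE ∘ φ.onE
  map_o e := by simp [ψ.map_o, φ.map_o]
  map_t e := by simp [ψ.map_t, φ.map_t]
  bijV := ψ.bijV.comp φ.bijV
  bijE := ψ.bijE.comp φ.bijE

noncomputable def Iso.symm (φ : Iso A B) : Iso B A where
  onV := (Equiv.ofBijective _ φ.bijV).symm
  onE := (Equiv.ofBijective _ φ.bijE).symm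
  map_o f := by
    rw [Equiv.eq_symm_apply, Equiv.ofBijective_apply, ← φ.map_o,
      ← Equiv.ofBijective_apply _ φ.bijE, Equiv.apply_symm_apply]
  map_t f := by
    rw [Equiv.eq_symm_apply, Equiv.ofBijective_apply, ← φ.map_t,
      ← Equiv.ofBijective_apply _ φ.bijE, Equiv.apply_symm_apply]
  bijV := (Equiv.ofBijective _ φ.bijV).symm.bijective
  bijE := (Equiv.ofBijective _ φ.bijE).symm.bijective

theorem RootedIso.refl (A : Multigraph) (a : A.V) : RootedIso A a A a := ⟨Iso.refl A, rfl⟩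

theorem RootedIso.symm {a : A.V} {b : B.V} : RootedIso A a B b → RootedIso B b A a
  | ⟨φ, hφ⟩ => ⟨φ.symm, (Equiv.ofBijective _ φ.bijV).symm_apply_eq.mpr hφ.symm⟩

theorem RootedIso.trans {a : A.V} {b : B.V} {c : C.V} :
    RootedIso A a B b → RootedIso B b C c → RootedIso A a C c
  | ⟨φ, hφ⟩, ⟨ψ, hψ⟩ => ⟨φ.trans ψ, by simp [Iso.trans, hφ, hψ]⟩

def Hom.outMap (p : Hom A B) {v : A.V} {w : B.V} (h : p.onV v = w) :
    {e // A.o e = v} → {f // B.o f = w} :=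
  fun e => ⟨p.onE e, by rw [p.map_o, e.2, h]⟩

def Hom.IsCovering (p : Hom A B) : Prop :=
  ∀ v, Function.Bijective (p.outMap (v := v) rfl)

theorem Hom.IsCovering.eq_of_onE_eq {p : Hom A B} (hp : p.IsCovering) {e e' : A.E}
    (ho : A.o e = A.o e') (h : p.onE e = p.onE e') : e = e' :=
  congrArg Subtype.val (@(hp (A.o e')).1 ⟨e, ho⟩ ⟨e', rfl⟩ (Subtype.ext h))

theorem Hom.IsCovering.exists_lift {p : Hom A B} (hp : p.IsCovering) {v : A.V} {f : B.E}
    (hf : B.o f = p.onV v) : ∃ e, A.o e = v ∧ p.onE e = f :=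
  let ⟨e, he⟩ := (hp v).2 ⟨f, hf⟩
  ⟨e.1, e.2, congrArg Subtype.val he⟩

theorem Iso.isCovering (φ : Iso A B) : φ.IsCovering := by
  intro v
  refine ⟨fun e e' h => Subtype.ext (φ.bijE.1 (congrArg Subtype.val h)), fun f => ?_⟩
  obtain ⟨f, hf⟩ := f
  obtain ⟨e, rfl⟩ := φ.bijE.2 f
  exact ⟨⟨e, φ.bijV.1 ((φ.map_o e).symm.trans hf)⟩, rfl⟩

theorem Hom.IsCovering.onE_injective {p : Hom A B} (hp : p.IsCovering)
    (hV : Function.Injective p.onV) : Function.Injective p.onE := fun e e' h =>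
  hp.eq_of_onE_eq (hV (by rw [← p.map_o, ← p.map_o, h])) h

theorem Hom.IsCovering.onE_surjective {p : Hom A B} (hp : p.IsCovering)
    (hV : Function.Surjective p.onV) : Function.Surjective p.onE := fun f =>
  let ⟨_, hv⟩ := hV (B.o f)
  let ⟨e, _, he⟩ := hp.exists_lift hv.symm
  ⟨e, he⟩

def Iso.ofIsCovering (p : Hom A B) (hp : p.IsCovering) (hV : Function.Bijective p.onV) :
    Iso A B :=
  ⟨p, hV, hp.onE_injective hV.1, hp.onE_surjective hV.2⟩

namespace WalkFrom

variable {a : A.V}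

def snoc (x : WalkFrom A a) (e : A.E) (h : A.o e = x.1) : WalkFrom A a :=
  ⟨A.t e, x.2.snoc e h⟩

def unsnoc : WalkFrom A a → Option (WalkFrom A a × A.E)
  | ⟨_, .nil⟩ => none
  | ⟨_, .snoc w e _⟩ => some (⟨_, w⟩, e)

theorem unsnoc_snoc (x : WalkFrom A a) (e : A.E) (h : A.o e = x.1) :
    (x.snoc e h).unsnoc = some (x, e) := rfl

theorem snoc_ne_nil (x : WalkFrom A a) (e : A.E) (h : A.o e = x.1) :
    x.snoc e h ≠ nilWalk A a := fun h' =>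
  Option.some_ne_none _ (congrArg unsnoc h')

theorem snoc_inj {x y : WalkFrom A a} {e f : A.E} {h : A.o e = x.1} {h' : A.o f = y.1} :
    x.snoc e h = y.snoc f h' ↔ x = y ∧ e = f := by
  refine ⟨fun hs => by simpa [unsnoc_snoc] using congrArg unsnoc hs, ?_⟩
  rintro ⟨rfl, rfl⟩
  rfl

@[elab_as_elim]
theorem induction {P : WalkFrom A a → Prop} (nil : P (nilWalk A a))
    (snoc : ∀ x e h, P x → P (x.snoc e h)) (x : WalkFrom A a) : P x := by
  obtain ⟨z, w⟩ := x
  induction w with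
  | nil => exact nil
  | snoc w e h ih => exact snoc _ e h ih

theorem eq_nil_or_snoc (x : WalkFrom A a) :
    x = nilWalk A a ∨ ∃ y e h, x = WalkFrom.snoc y e h :=
  induction (.inl rfl) (fun y e h _ => .inr ⟨y, e, h, rfl⟩) x

end WalkFrom

section UnfoldTree

variable {a : A.V}

abbrev UnfoldIso (A : Multigraph) (v : A.V) (B : Multigraph) (w : B.V) : Prop :=
  RootedIso (unfoldTree A v) (nilWalk A v) (unfoldTree B w) (nilWalk B w)

def edgeOf (X : (unfoldTree A a).E) : A.E := X.2.2.1

theorem unfoldTree_edge_ext {X X' : (unfoldTree A a).E}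
    (ho : (unfoldTree A a).o X = (unfoldTree A a).o X') (he : edgeOf X = edgeOf X') : X = X' := by
  obtain ⟨z, w, e, _⟩ := X
  obtain ⟨z', w', e', _⟩ := X'
  obtain ⟨rfl, hw⟩ := Sigma.mk.inj_iff.mp ho
  cases eq_of_heq hw
  cases (he : e = e')
  rfl

def termHom (A : Multigraph) (a : A.V) : Hom (unfoldTree A a) A where
  onV x := x.1
  onE := edgeOf
  map_o X := X.2.2.2
  map_t _ := rfl

theorem termHom_isCovering (A : Multigraph) (a : A.V) : (termHom A a).IsCovering := fun x =>
  ⟨fun X X' h => Subtype.ext (unfoldTree_edge_ext (X.2.trans X'.2.symm) (congrArg Subtype.val h)),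
    fun e => ⟨⟨⟨x.1, x.2, e⟩, rfl⟩, rfl⟩⟩

theorem walkFrom_cast {z z' : A.V} (h : z = z') (w : Walk A a z) :
    (⟨z', h ▸ w⟩ : WalkFrom A a) = ⟨z, w⟩ := by
  subst h; rfl

def Hom.mapWalk (p : Hom A B) : ∀ {z : A.V}, Walk A a z → Walk B (p.onV a) (p.onV z)
  | _, .nil => .nil
  | _, .snoc w e h => p.map_t e ▸ (p.mapWalk w).snoc (p.onE e) (by rw [p.map_o, h])

def Hom.mapWalkFrom (p : Hom A B) (x : WalkFrom A a) : WalkFrom B (p.onV a) :=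
  ⟨p.onV x.1, p.mapWalk x.2⟩

theorem Hom.mapWalkFrom_snoc (p : Hom A B) (x : WalkFrom A a) (e : A.E) (h : A.o e = x.1) :
    p.mapWalkFrom (x.snoc e h) = (p.mapWalkFrom x).snoc (p.onE e) (by rw [p.map_o, h]; rfl) :=
  walkFrom_cast (p.map_t e) _

def Hom.unfold (p : Hom A B) (a : A.V) : Hom (unfoldTree A a) (unfoldTree B (p.onV a)) where
  onV := p.mapWalkFrom
  onE X := ⟨p.onV X.1, p.mapWalk X.2.1, p.onE X.2.2.1, by rw [p.map_o, X.2.2.2]⟩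
  map_o _ := rfl
  map_t X := (p.mapWalkFrom_snoc ⟨X.1, X.2.1⟩ X.2.2.1 X.2.2.2).symm

theorem Hom.IsCovering.unfold {p : Hom A B} (hp : p.IsCovering) (a : A.V) :
    (p.unfold a).IsCovering := by
  intro x
  constructor
  · rintro ⟨X, hX⟩ ⟨X', hX'⟩ h
    have he : p.onE (edgeOf X) = p.onE (edgeOf X') := congrArg (edgeOf ∘ Subtype.val) h
    have ho : A.o (edgeOf X) = A.o (edgeOf X') :=
      X.2.2.2.trans ((congrArg Sigma.fst (hX.trans hX'.symm)).trans X'.2.2.2.symm)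
    exact Subtype.ext (unfoldTree_edge_ext (hX.trans hX'.symm) (hp.eq_of_onE_eq ho he))
  · rintro ⟨Y, hY⟩
    obtain ⟨e, he, hpe⟩ := hp.exists_lift (Y.2.2.2.trans (congrArg Sigma.fst hY))
    exact ⟨⟨⟨x.1, x.2, e, he⟩, rfl⟩, Subtype.ext (unfoldTree_edge_ext hY.symm hpe)⟩

theorem Hom.IsCovering.mapWalkFrom_injective {p : Hom A B} (hp : p.IsCovering) :
    Function.Injective (p.mapWalkFrom (a := a)) := by
  intro x y hxy
  induction x using WalkFrom.induction generalizing y with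
  | nil =>
    rcases y.eq_nil_or_snoc with rfl | ⟨y, f, hf, rfl⟩
    · rfl
    · rw [p.mapWalkFrom_snoc] at hxy
      exact absurd hxy.symm (WalkFrom.snoc_ne_nil _ _ _)
  | snoc x e he ih =>
    rcases y.eq_nil_or_snoc with rfl | ⟨y, f, hf, rfl⟩
    · rw [p.mapWalkFrom_snoc] at hxy
      exact absurd hxy (WalkFrom.snoc_ne_nil _ _ _)
    · rw [p.mapWalkFrom_snoc, p.mapWalkFrom_snoc, WalkFrom.snoc_inj] at hxy
      obtain rfl := ih hxy.1
      obtain rfl := hp.eq_of_onE_eq (he.trans hf.symm) hxy.2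
      rfl

theorem Hom.IsCovering.mapWalkFrom_surjective {p : Hom A B} (hp : p.IsCovering) :
    Function.Surjective (p.mapWalkFrom (a := a)) := by
  intro y
  induction y using WalkFrom.induction with
  | nil => exact ⟨nilWalk A a, rfl⟩
  | snoc y f hf ih =>
    obtain ⟨x, rfl⟩ := ih
    obtain ⟨e, he, rfl⟩ := hp.exists_lift (v := x.1) hf
    exact ⟨x.snoc e he, p.mapWalkFrom_snoc x e he⟩

theorem Hom.IsCovering.unfoldIso {p : Hom A B} (hp : p.IsCovering) (a : A.V) :
    UnfoldIso A a B (p.onV a) :=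
  ⟨Iso.ofIsCovering (p.unfold a) (hp.unfold a)
    ⟨hp.mapWalkFrom_injective, hp.mapWalkFrom_surjective⟩, rfl⟩

noncomputable def Hom.IsCovering.outEquiv {p : Hom A B} (hp : p.IsCovering) {v : A.V} {w : B.V}
    (h : p.onV v = w) : {e // A.o e = v} ≃ {f // B.o f = w} :=
  Equiv.ofBijective (p.outMap h) (by subst h; exact hp v)

theorem Iso.unfoldIso_terminus {b : B.V} (φ : Iso (unfoldTree A a) (unfoldTree B b))
    (x : WalkFrom A a) : UnfoldIso A x.1 B (φ.onV x).1 :=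
  ((termHom_isCovering A a).unfoldIso x).symm.trans
    ((φ.isCovering.unfoldIso x).trans ((termHom_isCovering B b).unfoldIso (φ.onV x)))

theorem UnfoldIso.exists_outEquiv {v : A.V} {w : B.V} (h : UnfoldIso A v B w) :
    ∃ σ : {e // A.o e = v} ≃ {f // B.o f = w},
      ∀ e, UnfoldIso A (A.t e.1) B (B.t (σ e).1) := by
  obtain ⟨φ, hφ⟩ := h
  let τA := (termHom_isCovering A v).outEquiv (v := nilWalk A v) rfl
  let τB := (termHom_isCovering B w).outEquiv (v := nilWalk B w) rfl
  -- the bijection of root edges induced by `φ`, read through the terminus coverings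
  refine ⟨τA.symm.trans ((φ.isCovering.outEquiv hφ).trans τB), fun e => ?_⟩
  set X := τA.symm e
  have hX : edgeOf X.1 = e.1 := congrArg Subtype.val (τA.apply_symm_apply e)
  have h := φ.unfoldIso_terminus ((unfoldTree A v).t X.1)
  rw [← φ.map_t] at h
  rw [← hX]
  exact h

end UnfoldTree

theorem RootedIso.unfoldIso {a : A.V} {b : B.V} : RootedIso A a B b → UnfoldIso A a B b
  | ⟨ι, hι⟩ => hι ▸ ι.isCovering.unfoldIso a

def GraphEquiv.mkHom (s : GraphEquiv A) : Hom A s.quot :=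
  ⟨Quot.mk _, Quot.mk _, fun _ => rfl, fun _ => rfl⟩

theorem GraphEquiv.NonEdgeCollapsing.mkHom_isCovering {s : GraphEquiv A}
    (hs : s.NonEdgeCollapsing) : s.mkHom.IsCovering := by
  intro v
  constructor
  · rintro ⟨e, he⟩ ⟨e', he'⟩ h
    have hr : s.rE e e' := s.equivE.eqvGen_iff.mp (Quot.eqvGen_exact (congrArg Subtype.val h))
    obtain ⟨_, _, huniq⟩ := hs v v (s.equivV.refl v) e he
    exact Subtype.ext ((huniq e ⟨he, s.equivE.refl e⟩).trans (huniq e' ⟨he', hr⟩).symm)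
  · rintro ⟨f, hf⟩
    obtain ⟨e₀, rfl⟩ := Quot.exists_rep f
    have hr : s.rV (A.o e₀) v :=
      s.equivV.eqvGen_iff.mp (Quot.eqvGen_exact (hf : Quot.mk s.rV (A.o e₀) = _))
    obtain ⟨e, ⟨he, hre⟩, -⟩ := hs _ _ hr e₀ rfl
    exact ⟨⟨e, he⟩, Subtype.ext (Quot.sound (s.equivE.symm hre))⟩

def Hom.ker (p : Hom A B) : GraphEquiv A where
  rV v v' := p.onV v = p.onV v'
  rE e e' := p.onE e = p.onE e'
  equivV := ⟨fun _ => rfl, Eq.symm, Eq.trans⟩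
  equivE := ⟨fun _ => rfl, Eq.symm, Eq.trans⟩
  compat_o e e' h := by simp only [← p.map_o, h]
  compat_t e e' h := by simp only [← p.map_t, h]

theorem Hom.IsCovering.ker_nonEdgeCollapsing {p : Hom A B} (hp : p.IsCovering) :
    p.ker.NonEdgeCollapsing := by
  intro v v' hv e he
  have hf : B.o (p.onE e) = p.onV v' := by rw [p.map_o, he]; exact hv
  obtain ⟨e', he', hpe⟩ := hp.exists_lift hf
  exact ⟨e', ⟨he', hpe.symm⟩, fun e'' ⟨he'', h⟩ =>
    hp.eq_of_onE_eq (he''.trans he'.symm) (h.symm.trans hpe.symm)⟩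

theorem quot_lift_bijective {α β : Type} {f : α → β} (hf : Function.Surjective f) :
    Function.Bijective (Quot.lift (r := fun a a' => f a = f a') f fun _ _ => id) := by
  refine ⟨?_, fun b => (hf b).imp' (Quot.mk _) fun _ => id⟩
  rintro ⟨a⟩ ⟨a'⟩ h
  exact Quot.sound h

def Hom.kerLift (p : Hom A B) : Hom p.ker.quot B where
  onV := Quot.lift p.onV fun _ _ => id
  onE := Quot.lift p.onE fun _ _ => id
  map_o := Quot.ind p.map_o
  map_t := Quot.ind p.map_t

theorem Hom.IsCovering.exists_quot_rootedIso {p : Hom A B} (hp : p.IsCovering)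
    (hV : Function.Surjective p.onV) (v : A.V) :
    ∃ s : GraphEquiv A, s.NonEdgeCollapsing ∧ RootedIso s.quot (Quot.mk s.rV v) B (p.onV v) :=
  ⟨p.ker, hp.ker_nonEdgeCollapsing,
    ⟨⟨p.kerLift, quot_lift_bijective hV, quot_lift_bijective (hp.onE_surjective hV)⟩,
      rfl⟩⟩

def unfoldSetoid (H : Multigraph) : Setoid H.V where
  r v w := UnfoldIso H v H w
  iseqv := ⟨fun _ => RootedIso.refl _ _, RootedIso.symm, RootedIso.trans⟩

/-- The vertices are the isomorphism types of the unfolding trees of `H`; the out-edges of a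
type are those of a chosen representative. -/
def treeTypeGraph (H : Multigraph) : Multigraph where
  V := Quotient (unfoldSetoid H)
  E := Σ c : Quotient (unfoldSetoid H), {f : H.E // H.o f = c.out}
  o x := x.1
  t x := Quotient.mk _ (H.t x.2.1)

theorem exists_isCovering_treeTypeGraph {H : Multigraph}
    (h : ∀ v : A.V, ∃ w, UnfoldIso A v H w) :
    ∃ p : Hom A (treeTypeGraph H), p.IsCovering ∧
      ∀ v w, UnfoldIso A v H w → p.onV v = Quotient.mk _ w := by
  choose c hc using h
  have hrep : ∀ v, UnfoldIso A v H (Quotient.mk (unfoldSetoid H) (c v)).out := fun v =>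
    (hc v).trans (Quotient.mk_out (s := unfoldSetoid H) (c v)).symm
  choose σ hσ using fun v => (hrep v).exists_outEquiv
  let p : Hom A (treeTypeGraph H) :=
    { onV v := Quotient.mk _ (c v)
      onE e := ⟨Quotient.mk _ (c (A.o e)), σ (A.o e) ⟨e, rfl⟩⟩
      map_o _ := rfl
      map_t e := Quotient.sound ((hσ _ ⟨e, rfl⟩).symm.trans (hc (A.t e))) }
  have hpE : ∀ {v} (e : {e // A.o e = v}), p.onE e = ⟨Quotient.mk _ (c v), σ v e⟩ := by
    rintro _ ⟨e, rfl⟩; rfl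
  refine ⟨p, fun v => ⟨fun e e' h => ?_, ?_⟩, fun v w hw => ?_⟩
  · have h' : p.onE e = p.onE e' := congrArg Subtype.val h
    rw [hpE, hpE] at h'
    exact (σ v).injective (eq_of_heq (Sigma.mk.inj_iff.mp h').2)
  · rintro ⟨⟨c', f⟩, hf⟩
    obtain rfl : c' = Quotient.mk _ (c v) := hf
    exact ⟨(σ v).symm f, Subtype.ext ((hpE _).trans (by rw [Equiv.apply_symm_apply]))⟩
  · exact Quotient.sound ((hc v).symm.trans hw)

theorem UnfoldIso.exists_of_reaches {a v : A.V} {b : B.V} (h : UnfoldIso A a B b)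
    (hv : Reaches A a v) : ∃ w, UnfoldIso A v B w :=
  let ⟨φ, _⟩ := h
  let ⟨x⟩ := hv
  ⟨_, φ.unfoldIso_terminus ⟨v, x⟩⟩

end Multigraph

open Multigraph

/-- Two rooted multigraphs have rooted-isomorphic unfolding trees iff
suitable non-edge-collapsing quotients of them are rooted-isomorphic. -/
theorem statement7 (G : Multigraph) (S : G.V) (H : Multigraph) (R : H.V)
    (hS : IsRoot G S) (hR : IsRoot H R) :
    RootedIso (unfoldTree G S) (nilWalk G S) (unfoldTree H R) (nilWalk H R) ↔
      ∃ (sG : GraphEquiv G) (sH : GraphEquiv H),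
        sG.NonEdgeCollapsing ∧ sH.NonEdgeCollapsing ∧
        RootedIso sG.quot (Quot.mk sG.rV S) sH.quot (Quot.mk sH.rV R) := by
  constructor
  · intro (h : UnfoldIso G S H R)
    obtain ⟨pG, hpG, hG⟩ := exists_isCovering_treeTypeGraph fun v => h.exists_of_reaches (hS v)
    obtain ⟨pH, hpH, hH⟩ :=
      exists_isCovering_treeTypeGraph (A := H) (H := H) fun w => ⟨w, .refl _ _⟩
    have hG_surj : Function.Surjective pG.onV := fun q => q.inductionOn fun w =>
      let ⟨v, hv⟩ := UnfoldIso.exists_of_reaches h.symm (hR w)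
      ⟨v, hG v w hv.symm⟩
    have hH_surj : Function.Surjective pH.onV := fun q => q.inductionOn fun w =>
      ⟨w, hH w w (.refl _ _)⟩
    obtain ⟨sG, hsG, isoG⟩ := hpG.exists_quot_rootedIso hG_surj S
    obtain ⟨sH, hsH, isoH⟩ := hpH.exists_quot_rootedIso hH_surj R
    rw [hG S R h, ← hH R R (.refl _ _)] at isoG
    exact ⟨sG, sH, hsG, hsH, isoG.trans isoH.symm⟩
  · rintro ⟨sG, sH, hsG, hsH, hiso⟩
    exact (hsG.mkHom_isCovering.unfoldIso S).trans
      (hiso.unfoldIso.trans (hsH.mkHom_isCovering.unfoldIso R).symm)
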